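/- Given n items with weights w : Fin n → ℕ and m bins of capacity W with ∑ᵢ wᵢ = m·W, there is an assignment g : Fin n → Fin m with ∑_{i : g(i)=j} wᵢ ≤ W for all j if and only if there is an assignment g with ∑_{i : g(i)=j} wᵢ = W for all j, which in turn holds if and only if the total cost ∑ᵢ wᵢ − (number of bins j with ∑_{i : g(i)=j} wᵢ ≥ W) is at most m·(W−1) for some assignment g (assuming W ≥ 1). -/

import Mathlib

/-!
The bin loads of any assignment sum to `m * W`. Hence loads that are all `≤ W`, or all `≥ W`,
are all `= W`. The cost of an assignment is `m * W` minus the number of bins reaching `W`, so it is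
at most `m * (W - 1)` exactly when all `m` bins reach `W`.
-/

open Finset

section LoadBalance

variable {ι : Type*} [Fintype ι] {f : ι → ℕ} {c : ℕ}

theorem forall_le_iff_forall_eq_of_sum_eq (hsum : ∑ j, f j = Fintype.card ι * c) :
    (∀ j, f j ≤ c) ↔ ∀ j, f j = c := by
  refine ⟨fun hle => ?_, fun heq j => (heq j).le⟩
  have hsum' : ∑ j, f j = ∑ _j : ι, c := by simpa using hsum
  simpa using (sum_eq_sum_iff_of_le fun j _ => hle j).1 hsum'

theorem forall_ge_iff_forall_eq_of_sum_eq (hsum : ∑ j, f j = Fintype.card ι * c) :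
    (∀ j, c ≤ f j) ↔ ∀ j, f j = c := by
  refine ⟨fun hge => ?_, fun heq j => (heq j).ge⟩
  have hsum' : ∑ _j : ι, c = ∑ j, f j := by simpa using hsum.symm
  simpa [eq_comm] using (sum_eq_sum_iff_of_le fun j _ => hge j).1 hsum'

theorem card_le_card_filter_iff {p : ι → Prop} [DecidablePred p] :
    Fintype.card ι ≤ #(univ.filter p) ↔ ∀ j, p j := by
  rw [← card_univ, (card_filter_le univ p).ge_iff_eq, card_filter_eq_iff]
  simp

theorem sub_card_filter_le_iff_forall_eq (hsum : ∑ j, f j = Fintype.card ι * c) :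
    (Fintype.card ι * c : ℤ) - #(univ.filter fun j => c ≤ f j) ≤ Fintype.card ι * ((c : ℤ) - 1) ↔
      ∀ j, f j = c := by
  rw [← forall_ge_iff_forall_eq_of_sum_eq hsum, ← card_le_card_filter_iff, ← Nat.cast_le (α := ℤ)]
  constructor <;> intro h <;> linarith

end LoadBalance

theorem stmt_1 (n m W : ℕ) (w : Fin n → ℕ)
    (hsum : ∑ i, w i = m * W) :
    ((∃ g : Fin n → Fin m,
        ∀ j, ∑ i ∈ Finset.univ.filter (fun i => g i = j), w i ≤ W) ↔
      (∃ g : Fin n → Fin m,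
        ∀ j, ∑ i ∈ Finset.univ.filter (fun i => g i = j), w i = W)) ∧
    ((∃ g : Fin n → Fin m,
        ∀ j, ∑ i ∈ Finset.univ.filter (fun i => g i = j), w i = W) ↔
      (∃ g : Fin n → Fin m,
        ((∑ i, w i : ℤ) -
            ((Finset.univ.filter
              (fun j => W ≤ ∑ i ∈ Finset.univ.filter (fun i => g i = j), w i)).card : ℤ))
          ≤ (m : ℤ) * ((W : ℤ) - 1))) := by
  have hloads (g : Fin n → Fin m) :
      ∑ j, ∑ i ∈ univ.filter (fun i => g i = j), w i = Fintype.card (Fin m) * W := by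
    rw [sum_fiberwise, hsum, Fintype.card_fin]
  refine ⟨exists_congr fun g => forall_le_iff_forall_eq_of_sum_eq (hloads g),
    exists_congr fun g => ?_⟩
  have htotal : (∑ i, w i : ℤ) = m * W := by exact_mod_cast hsum
  rw [htotal, ← sub_card_filter_le_iff_forall_eq (hloads g), Fintype.card_fin]
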